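/- Alternation lemma: assume the signature has been transformed by internal naming so that every continuation type of a constructor is a type name, i.e., types follow the grammar A ::= ⊕{ℓ : T_ℓ}_{ℓ∈L} | &{ℓ : T_ℓ}_{ℓ∈L} | T₁ ⊗ T₂ | T₁ ⊸ T₂ | 1 | ?{φ}. T | !{φ}. T | ?n. T | !n. T with T ::= V[ē], and all type definitions are contractive. Then in every subgoal V ; C ; Γ ⊢ A ≡ B arising in a derivation of the algorithmic type-equality judgment, either A and B are both structural (constructor) types or both are type names. -/
import Mathlib


/-! Arithmetic expressions and Presburger propositions over natural numbers,
with de Bruijn index variables. -/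

inductive AExp : Type
  | const : ℕ → AExp
  | var : ℕ → AExp
  | add : AExp → AExp → AExp
  | sub : AExp → AExp → AExp
  | mul : ℕ → AExp → AExp
deriving DecidableEq

namespace AExp

def eval (σ : ℕ → ℕ) : AExp → ℕ
  | const n => n
  | var n => σ n
  | add a b => a.eval σ + b.eval σ
  | sub a b => a.eval σ - b.eval σ
  | mul k a => k * a.eval σ

def subst (τ : ℕ → AExp) : AExp → AExp
  | const n => const n
  | var n => τ n
  | add a b => add (a.subst τ) (b.subst τ)
  | sub a b => sub (a.subst τ) (b.subst τ)
  | mul k a => mul k (a.subst τ)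

def hasVar : AExp → Bool
  | const _ => false
  | var _ => true
  | add a b => a.hasVar || b.hasVar
  | sub a b => a.hasVar || b.hasVar
  | mul _ a => a.hasVar

/-- Normalization: a closed arithmetic expression is replaced by its value. -/
def norm (e : AExp) : AExp := if e.hasVar then e else .const (e.eval (fun _ => 0))

/-- Substitution followed by normalization of closed expressions to their values. -/
def substN (τ : ℕ → AExp) (e : AExp) : AExp := (e.subst τ).norm

/-- All variables of `e` are `< k`. -/
def ClosedAt (k : ℕ) : AExp → Prop
  | const _ => True
  | var n => n < k
  | add a b => a.ClosedAt k ∧ b.ClosedAt k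
  | sub a b => a.ClosedAt k ∧ b.ClosedAt k
  | mul _ a => a.ClosedAt k

end AExp

/-- Cons for substitutions/assignments. -/
def scons {α : Type*} (i : α) (σ : ℕ → α) : ℕ → α
  | 0 => i
  | n + 1 => σ n

/-- Lifting a substitution under a binder. -/
def liftτ (τ : ℕ → AExp) : ℕ → AExp :=
  scons (AExp.var 0) (fun n => (τ n).subst (fun k => AExp.var (k + 1)))

inductive AProp : Type
  | aeq : AExp → AExp → AProp
  | agt : AExp → AExp → AProp
  | tt : AProp
  | ff : AProp
  | conj : AProp → AProp → AProp
  | disj : AProp → AProp → AProp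
  | neg : AProp → AProp
  | aexists : AProp → AProp
  | aforall : AProp → AProp

namespace AProp

def holds (σ : ℕ → ℕ) : AProp → Prop
  | aeq a b => a.eval σ = b.eval σ
  | agt a b => b.eval σ < a.eval σ
  | tt => True
  | ff => False
  | conj φ ψ => φ.holds σ ∧ ψ.holds σ
  | disj φ ψ => φ.holds σ ∨ ψ.holds σ
  | neg φ => ¬ φ.holds σ
  | aexists φ => ∃ i : ℕ, φ.holds (scons i σ)
  | aforall φ => ∀ i : ℕ, φ.holds (scons i σ)

def subst (τ : ℕ → AExp) : AProp → AProp
  | aeq a b => aeq (a.subst τ) (b.subst τ)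
  | agt a b => agt (a.subst τ) (b.subst τ)
  | tt => tt
  | ff => ff
  | conj φ ψ => conj (φ.subst τ) (ψ.subst τ)
  | disj φ ψ => disj (φ.subst τ) (ψ.subst τ)
  | neg φ => neg (φ.subst τ)
  | aexists φ => aexists (φ.subst (liftτ τ))
  | aforall φ => aforall (φ.subst (liftτ τ))

def ClosedAt (k : ℕ) : AProp → Prop
  | aeq a b => a.ClosedAt k ∧ b.ClosedAt k
  | agt a b => a.ClosedAt k ∧ b.ClosedAt k
  | tt => True
  | ff => True
  | conj φ ψ => φ.ClosedAt k ∧ ψ.ClosedAt k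
  | disj φ ψ => φ.ClosedAt k ∧ ψ.ClosedAt k
  | neg φ => φ.ClosedAt k
  | aexists φ => φ.ClosedAt (k + 1)
  | aforall φ => φ.ClosedAt (k + 1)

end AProp

/-! Session types.  Labeled choices are represented by association lists of
labels (natural numbers) and types.  Quantifiers bind a de Bruijn index
variable. -/

inductive STy : Type
  | ichoice : List (ℕ × STy) → STy                -- ⊕{ℓ : A_ℓ}
  | echoice : List (ℕ × STy) → STy                -- &{ℓ : A_ℓ}
  | tensor : STy → STy → STy                      -- A ⊗ B
  | lolli : STy → STy → STy                       -- A ⊸ B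
  | one : STy                                     -- 1
  | tname : ℕ → List AExp → STy                   -- V[ē]
  | sassert : AProp → STy → STy                   -- ?{φ}. A
  | sassume : AProp → STy → STy                   -- !{φ}. A
  | sexists : STy → STy                           -- ?n. A
  | sforall : STy → STy                           -- !n. A

namespace STy

/-- Substitution of arithmetic expressions for index variables in a session type. -/
def subst (τ : ℕ → AExp) : STy → STy
  | ichoice L => ichoice (L.attach.map (fun p => (p.1.1, p.1.2.subst τ)))
  | echoice L => echoice (L.attach.map (fun p => (p.1.1, p.1.2.subst τ)))
  | tensor A B => tensor (A.subst τ) (B.subst τ)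
  | lolli A B => lolli (A.subst τ) (B.subst τ)
  | one => one
  | tname v es => tname v (es.map (AExp.substN τ))
  | sassert φ A => sassert (φ.subst τ) (A.subst τ)
  | sassume φ A => sassume (φ.subst τ) (A.subst τ)
  | sexists A => sexists (A.subst (liftτ τ))
  | sforall A => sforall (A.subst (liftτ τ))
decreasing_by
  all_goals simp_wf
  all_goals try omega
  all_goals
    (obtain ⟨⟨l, A⟩, hp⟩ := p
     have h := List.sizeOf_lt_of_mem hp
     simp [Prod.mk.sizeOf_spec] at h ⊢
     omega)

/-- Substituting a number for the index variable bound by a quantifier. -/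
def subst0 (i : ℕ) (A : STy) : STy := A.subst (scons (AExp.const i) AExp.var)

/-- Ground instantiation of all free index variables by natural numbers. -/
def substC (σ : ℕ → ℕ) (A : STy) : STy := A.subst (fun n => AExp.const (σ n))

/-- All free index variables of the type are below `k`. -/
inductive ClosedAt : ℕ → STy → Prop
  | ichoice {k L} : (∀ p ∈ L, ClosedAt k p.2) → ClosedAt k (ichoice L)
  | echoice {k L} : (∀ p ∈ L, ClosedAt k p.2) → ClosedAt k (echoice L)
  | tensor {k A B} : ClosedAt k A → ClosedAt k B → ClosedAt k (tensor A B)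
  | lolli {k A B} : ClosedAt k A → ClosedAt k B → ClosedAt k (lolli A B)
  | one {k} : ClosedAt k one
  | tname {k v es} : (∀ e ∈ es, e.ClosedAt k) → ClosedAt k (tname v es)
  | sassert {k φ A} : φ.ClosedAt k → ClosedAt k A → ClosedAt k (sassert φ A)
  | sassume {k φ A} : φ.ClosedAt k → ClosedAt k A → ClosedAt k (sassume φ A)
  | sexists {k A} : ClosedAt (k + 1) A → ClosedAt k (sexists A)
  | sforall {k A} : ClosedAt (k + 1) A → ClosedAt k (sforall A)

/-- A closed session type: no free index variables. -/
def Closed (A : STy) : Prop := ClosedAt 0 A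

def isName : STy → Prop
  | tname _ _ => True
  | _ => False

end STy

/-- A signature is a finite list of type definitions; the type name `v` is
defined by the `v`-th entry (whose free index variables `0, …` are the
parameters `n̄`). -/
abbrev Sig : Type := List STy

/-- A contractive signature: no definition body is itself a type name. -/
def Contractive (Sg : Sig) : Prop := ∀ B ∈ Sg, ¬ B.isName

/-- Unfolding of a type: a type name is replaced by its instantiated
definition; all other types are returned unchanged. -/
def unfoldT (Sg : Sig) : STy → STy
  | .tname v es => (Sg.getD v .one).subst (fun n => es.getD n (.const 0))
  | A => A

/-- The default (empty) assignment; used to evaluate closed propositions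
in the standard model. -/
def σ0 : ℕ → ℕ := fun _ => 0

/-- Componentwise matching of labeled alternatives by a relation. -/
def MatchAlts (R : STy → STy → Prop) (L L' : List (ℕ × STy)) : Prop :=
  List.Forall₂ (fun p q => p.1 = q.1 ∧ R p.2 q.2) L L'

/-- `R` is a type bisimulation (Definition of type bisimulation). -/
def IsBisim (Sg : Sig) (R : STy → STy → Prop) : Prop :=
  ∀ ⦃A B : STy⦄, R A B →
    (∀ L, unfoldT Sg A = .ichoice L →
      ∃ L', unfoldT Sg B = .ichoice L' ∧ MatchAlts R L L') ∧
    (∀ L, unfoldT Sg A = .echoice L →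
      ∃ L', unfoldT Sg B = .echoice L' ∧ MatchAlts R L L') ∧
    (∀ A₁ A₂, unfoldT Sg A = .tensor A₁ A₂ →
      ∃ B₁ B₂, unfoldT Sg B = .tensor B₁ B₂ ∧ R A₁ B₁ ∧ R A₂ B₂) ∧
    (∀ A₁ A₂, unfoldT Sg A = .lolli A₁ A₂ →
      ∃ B₁ B₂, unfoldT Sg B = .lolli B₁ B₂ ∧ R A₁ B₁ ∧ R A₂ B₂) ∧
    (unfoldT Sg A = .one → unfoldT Sg B = .one) ∧
    (∀ φ A', unfoldT Sg A = .sassert φ A' →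
      ∃ ψ B', unfoldT Sg B = .sassert ψ B' ∧
        ((φ.holds σ0 ∧ ψ.holds σ0 ∧ R A' B') ∨ (¬ φ.holds σ0 ∧ ¬ ψ.holds σ0))) ∧
    (∀ φ A', unfoldT Sg A = .sassume φ A' →
      ∃ ψ B', unfoldT Sg B = .sassume ψ B' ∧
        ((φ.holds σ0 ∧ ψ.holds σ0 ∧ R A' B') ∨ (¬ φ.holds σ0 ∧ ¬ ψ.holds σ0))) ∧
    (∀ A', unfoldT Sg A = .sexists A' →
      ∃ B', unfoldT Sg B = .sexists B' ∧ ∀ i : ℕ, R (A'.subst0 i) (B'.subst0 i)) ∧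
    (∀ A', unfoldT Sg A = .sforall A' →
      ∃ B', unfoldT Sg B = .sforall B' ∧ ∀ i : ℕ, R (A'.subst0 i) (B'.subst0 i))

/-- Type equality: `A ≡ B` iff some type bisimulation relates them. -/
def TpEq (Sg : Sig) (A B : STy) : Prop :=
  ∃ R : STy → STy → Prop, IsBisim Sg R ∧ R A B

/-- The quantified judgment `∀V. C ⇒ A ≡ B`. -/
def EqUnder (Sg : Sig) (C : AProp) (A B : STy) : Prop :=
  ∀ σ : ℕ → ℕ, C.holds σ → TpEq Sg (A.substC σ) (B.substC σ)

/-! The algorithmic type equality judgment. -/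

/-- Semantic entailment `V ; C ⊨ φ` (over all assignments of naturals to the
index variables). -/
def Entails (C φ : AProp) : Prop := ∀ σ : ℕ → ℕ, C.holds σ → φ.holds σ

/-- `V ; C ⊨ φ ↔ ψ`. -/
def EntailsIff (C φ ψ : AProp) : Prop :=
  ∀ σ : ℕ → ℕ, C.holds σ → (φ.holds σ ↔ ψ.holds σ)

/-- Shifting a proposition when a fresh index variable is added to `V`. -/
def AProp.shift (φ : AProp) : AProp := φ.subst (fun n => .var (n + 1))

/-- A closure `∀V′. C′ ⇒ V₁[ē₁] ≡ V₂[ē₂]` stored in the context `Γ` of the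
algorithmic type-equality judgment. -/
structure Closure : Type where
  ctx : AProp
  v₁ : ℕ
  es₁ : List AExp
  v₂ : ℕ
  es₂ : List AExp

/-- Instantiation of the body of a type definition with index expressions. -/
def instDef (Sg : Sig) (v : ℕ) (es : List AExp) : STy :=
  (Sg.getD v .one).subst (fun n => es.getD n (.const 0))

/-- The algorithmic type equality judgment `V ; C ; Γ ⊢ A ≡ B`, parameterized
by an extra side condition `G` imposed on the two types of every conclusion
(take `G := fun _ _ => True` for the plain judgment). -/
inductive AlgEq (Sg : Sig) (G : STy → STy → Prop) :
    AProp → List Closure → STy → STy → Prop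
  | ichoice {C Γ} {L L' : List (ℕ × STy)} :
      G (.ichoice L) (.ichoice L') →
      L.map Prod.fst = L'.map Prod.fst →
      (∀ i, (h₁ : i < L.length) → (h₂ : i < L'.length) →
        AlgEq Sg G C Γ (L[i]).2 (L'[i]).2) →
      AlgEq Sg G C Γ (.ichoice L) (.ichoice L')
  | echoice {C Γ} {L L' : List (ℕ × STy)} :
      G (.echoice L) (.echoice L') →
      L.map Prod.fst = L'.map Prod.fst →
      (∀ i, (h₁ : i < L.length) → (h₂ : i < L'.length) →
        AlgEq Sg G C Γ (L[i]).2 (L'[i]).2) →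
      AlgEq Sg G C Γ (.echoice L) (.echoice L')
  | tensor {C Γ A₁ A₂ B₁ B₂} :
      G (.tensor A₁ A₂) (.tensor B₁ B₂) →
      AlgEq Sg G C Γ A₁ B₁ → AlgEq Sg G C Γ A₂ B₂ →
      AlgEq Sg G C Γ (.tensor A₁ A₂) (.tensor B₁ B₂)
  | lolli {C Γ A₁ A₂ B₁ B₂} :
      G (.lolli A₁ A₂) (.lolli B₁ B₂) →
      AlgEq Sg G C Γ A₁ B₁ → AlgEq Sg G C Γ A₂ B₂ →
      AlgEq Sg G C Γ (.lolli A₁ A₂) (.lolli B₁ B₂)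
  | one {C Γ} : G .one .one → AlgEq Sg G C Γ .one .one
  | sassert {C Γ φ ψ A B} :
      G (.sassert φ A) (.sassert ψ B) →
      EntailsIff C φ ψ →
      AlgEq Sg G (C.conj φ) Γ A B →
      AlgEq Sg G C Γ (.sassert φ A) (.sassert ψ B)
  | sassume {C Γ φ ψ A B} :
      G (.sassume φ A) (.sassume ψ B) →
      EntailsIff C φ ψ →
      AlgEq Sg G (C.conj φ) Γ A B →
      AlgEq Sg G C Γ (.sassume φ A) (.sassume ψ B)
  | sexists {C Γ A B} :
      G (.sexists A) (.sexists B) →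
      AlgEq Sg G C.shift Γ A B →
      AlgEq Sg G C Γ (.sexists A) (.sexists B)
  | sforall {C Γ A B} :
      G (.sforall A) (.sforall B) →
      AlgEq Sg G C.shift Γ A B →
      AlgEq Sg G C Γ (.sforall A) (.sforall B)
  | bot {C Γ A B} :
      G A B →
      (∀ σ : ℕ → ℕ, ¬ C.holds σ) →
      AlgEq Sg G C Γ A B
  | defr {C Γ C' v₁ v₂} {E₁ E₂ es₁ es₂ : List AExp} :
      G (.tname v₁ es₁) (.tname v₂ es₂) →
      Closure.mk C' v₁ E₁ v₂ E₂ ∈ Γ →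
      (∀ σ : ℕ → ℕ, C.holds σ → ∃ σ' : ℕ → ℕ, C'.holds σ' ∧
        E₁.map (AExp.eval σ') = es₁.map (AExp.eval σ) ∧
        E₂.map (AExp.eval σ') = es₂.map (AExp.eval σ)) →
      AlgEq Sg G C Γ (.tname v₁ es₁) (.tname v₂ es₂)
  | expd {C Γ v₁ v₂} {es₁ es₂ : List AExp} :
      G (.tname v₁ es₁) (.tname v₂ es₂) →
      AlgEq Sg G C (Closure.mk C v₁ es₁ v₂ es₂ :: Γ)
        (instDef Sg v₁ es₁) (instDef Sg v₂ es₂) →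
      AlgEq Sg G C Γ (.tname v₁ es₁) (.tname v₂ es₂)

/-! Statement 15: alternation lemma for the transformed (internally named)
grammar. -/

/-- A type following the transformed grammar for structural (constructor)
types: every continuation type of a constructor is a type name. -/
inductive NormalTy : STy → Prop
  | ichoice {L} : (∀ p ∈ L, (p.2 : STy).isName) → NormalTy (.ichoice L)
  | echoice {L} : (∀ p ∈ L, (p.2 : STy).isName) → NormalTy (.echoice L)
  | tensor {T₁ T₂} : T₁.isName → T₂.isName → NormalTy (.tensor T₁ T₂)
  | lolli {T₁ T₂} : T₁.isName → T₂.isName → NormalTy (.lolli T₁ T₂)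
  | one : NormalTy .one
  | sassert {φ T} : T.isName → NormalTy (.sassert φ T)
  | sassume {φ T} : T.isName → NormalTy (.sassume φ T)
  | sexists {T} : T.isName → NormalTy (.sexists T)
  | sforall {T} : T.isName → NormalTy (.sforall T)

/-- Either both types are structural (constructor) types of the transformed
grammar, or both are type names. -/
def Alternating (A B : STy) : Prop :=
  (NormalTy A ∧ NormalTy B) ∨ (A.isName ∧ B.isName)

lemma isName_subst {A : STy} (τ : ℕ → AExp) (h : A.isName) : (A.subst τ).isName := by
  cases A <;> simp [STy.isName, STy.subst] at h ⊢

lemma normalTy_subst {T : STy} (τ : ℕ → AExp) (h : NormalTy T) : NormalTy (T.subst τ) := by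
  cases h with
  | ichoice hL =>
    rw [STy.subst]
    exact NormalTy.ichoice (by
      rintro p hp
      simp only [List.mem_map, List.mem_attach, true_and] at hp
      obtain ⟨⟨q, hq⟩, rfl⟩ := hp
      exact isName_subst τ (hL q hq))
  | echoice hL =>
    rw [STy.subst]
    exact NormalTy.echoice (by
      rintro p hp
      simp only [List.mem_map, List.mem_attach, true_and] at hp
      obtain ⟨⟨q, hq⟩, rfl⟩ := hp
      exact isName_subst τ (hL q hq))
  | tensor h1 h2 => rw [STy.subst]; exact NormalTy.tensor (isName_subst τ h1) (isName_subst τ h2)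
  | lolli h1 h2 => rw [STy.subst]; exact NormalTy.lolli (isName_subst τ h1) (isName_subst τ h2)
  | one => rw [STy.subst]; exact NormalTy.one
  | sassert h1 => rw [STy.subst]; exact NormalTy.sassert (isName_subst τ h1)
  | sassume h1 => rw [STy.subst]; exact NormalTy.sassume (isName_subst τ h1)
  | sexists h1 => rw [STy.subst]; exact NormalTy.sexists (isName_subst _ h1)
  | sforall h1 => rw [STy.subst]; exact NormalTy.sforall (isName_subst _ h1)

lemma normalTy_instDef (Sg : Sig) (hSg : ∀ T ∈ Sg, NormalTy T) (v : ℕ) (es : List AExp) :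
    NormalTy (instDef Sg v es) := by
  apply normalTy_subst
  by_cases h : v < Sg.length
  · rw [List.getD_eq_getElem _ _ h]
    exact hSg _ (List.getElem_mem h)
  · rw [List.getD_eq_default _ _ (by omega)]
    exact NormalTy.one

/-- alternation lemma.  If the signature has been transformed by
internal naming (every definition body follows the restricted grammar) and the
root goal follows the restricted grammar, then every subgoal of a derivation
of the algorithmic type-equality judgment compares either two structural types
or two type names: the derivation can be annotated so that every conclusion
satisfies `Alternating`. -/
theorem alternation (Sg : Sig) (hSg : ∀ T ∈ Sg, NormalTy T)
    (C : AProp) (Γ : List Closure) (A B : STy)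
    (hroot : Alternating A B)
    (h : AlgEq Sg (fun _ _ => True) C Γ A B) :
    AlgEq Sg Alternating C Γ A B := by
  revert hroot
  induction h with
  | ichoice _ hfst _ ih =>
    intro hroot
    rcases hroot with ⟨hA, hB⟩ | ⟨hA, hB⟩
    · cases hA with
      | ichoice hL =>
        cases hB with
        | ichoice hL' =>
          exact AlgEq.ichoice (Or.inl ⟨NormalTy.ichoice hL, NormalTy.ichoice hL'⟩) hfst
            (fun i h₁ h₂ => ih i h₁ h₂
              (Or.inr ⟨hL _ (List.getElem_mem h₁), hL' _ (List.getElem_mem h₂)⟩))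
    · simp [STy.isName] at hA
  | echoice _ hfst _ ih =>
    intro hroot
    rcases hroot with ⟨hA, hB⟩ | ⟨hA, hB⟩
    · cases hA with
      | echoice hL =>
        cases hB with
        | echoice hL' =>
          exact AlgEq.echoice (Or.inl ⟨NormalTy.echoice hL, NormalTy.echoice hL'⟩) hfst
            (fun i h₁ h₂ => ih i h₁ h₂
              (Or.inr ⟨hL _ (List.getElem_mem h₁), hL' _ (List.getElem_mem h₂)⟩))
    · simp [STy.isName] at hA
  | tensor _ _ _ ih1 ih2 =>
    intro hroot
    rcases hroot with ⟨hA, hB⟩ | ⟨hA, hB⟩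
    · cases hA with
      | tensor h1 h2 =>
        cases hB with
        | tensor h1' h2' =>
          exact AlgEq.tensor (Or.inl ⟨NormalTy.tensor h1 h2, NormalTy.tensor h1' h2'⟩)
            (ih1 (Or.inr ⟨h1, h1'⟩)) (ih2 (Or.inr ⟨h2, h2'⟩))
    · simp [STy.isName] at hA
  | lolli _ _ _ ih1 ih2 =>
    intro hroot
    rcases hroot with ⟨hA, hB⟩ | ⟨hA, hB⟩
    · cases hA with
      | lolli h1 h2 =>
        cases hB with
        | lolli h1' h2' =>
          exact AlgEq.lolli (Or.inl ⟨NormalTy.lolli h1 h2, NormalTy.lolli h1' h2'⟩)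
            (ih1 (Or.inr ⟨h1, h1'⟩)) (ih2 (Or.inr ⟨h2, h2'⟩))
    · simp [STy.isName] at hA
  | one =>
    intro _
    exact AlgEq.one (Or.inl ⟨NormalTy.one, NormalTy.one⟩)
  | sassert _ hiff _ ih =>
    intro hroot
    rcases hroot with ⟨hA, hB⟩ | ⟨hA, hB⟩
    · cases hA with
      | sassert h1 =>
        cases hB with
        | sassert h1' =>
          exact AlgEq.sassert (Or.inl ⟨NormalTy.sassert h1, NormalTy.sassert h1'⟩) hiff
            (ih (Or.inr ⟨h1, h1'⟩))
    · simp [STy.isName] at hA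
  | sassume _ hiff _ ih =>
    intro hroot
    rcases hroot with ⟨hA, hB⟩ | ⟨hA, hB⟩
    · cases hA with
      | sassume h1 =>
        cases hB with
        | sassume h1' =>
          exact AlgEq.sassume (Or.inl ⟨NormalTy.sassume h1, NormalTy.sassume h1'⟩) hiff
            (ih (Or.inr ⟨h1, h1'⟩))
    · simp [STy.isName] at hA
  | sexists _ _ ih =>
    intro hroot
    rcases hroot with ⟨hA, hB⟩ | ⟨hA, hB⟩
    · cases hA with
      | sexists h1 =>
        cases hB with
        | sexists h1' =>
          exact AlgEq.sexists (Or.inl ⟨NormalTy.sexists h1, NormalTy.sexists h1'⟩)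
            (ih (Or.inr ⟨h1, h1'⟩))
    · simp [STy.isName] at hA
  | sforall _ _ ih =>
    intro hroot
    rcases hroot with ⟨hA, hB⟩ | ⟨hA, hB⟩
    · cases hA with
      | sforall h1 =>
        cases hB with
        | sforall h1' =>
          exact AlgEq.sforall (Or.inl ⟨NormalTy.sforall h1, NormalTy.sforall h1'⟩)
            (ih (Or.inr ⟨h1, h1'⟩))
    · simp [STy.isName] at hA
  | bot _ hbot =>
    intro hroot
    exact AlgEq.bot hroot hbot
  | defr _ hmem hent =>
    intro hroot
    exact AlgEq.defr hroot hmem hent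
  | expd _ _ ih =>
    intro hroot
    exact AlgEq.expd hroot
      (ih (Or.inl ⟨normalTy_instDef Sg hSg _ _, normalTy_instDef Sg hSg _ _⟩))
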